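/- arXiv:1407.6416 — 2 statements merged into one kernel-verified Lean document; each statement's English description precedes it below -/
import Mathlib

section
/- Let G be a connected finite weighted graph with positive edge weights, and let u and v be two vertices of G that have a common distance-preserving spanning tree T in G. Let P = (u = v_0, v_1, ..., v_k = v) be the unique shortest u-v path in G. Then for every vertex x of G there exists a unique vertex v_i on P such that d_G(x, v_i) = d_G(x, V(P)). -/
open SimpleGraph

/-- The weighted length of a walk: the sum of the weights of its edges. -/
def SimpleGraph.Walk.wlength {V : Type*} {G : SimpleGraph V} (w : V → V → ℝ) {x y : V}
    (p : G.Walk x y) : ℝ :=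
  (p.darts.map fun d => w d.toProd.1 d.toProd.2).sum

/-- The weighted distance between two vertices: the minimum weighted length of a walk. -/
noncomputable def SimpleGraph.wdist {V : Type*} (G : SimpleGraph V) (w : V → V → ℝ)
    (x y : V) : ℝ :=
  sInf {r : ℝ | ∃ p : G.Walk x y, p.wlength w = r}

/-- The weighted distance from a vertex to a set of vertices. -/
noncomputable def SimpleGraph.wdistS {V : Type*} (G : SimpleGraph V) (w : V → V → ℝ)
    (x : V) (S : Set V) : ℝ :=
  sInf (G.wdist w x '' S)

/-- `Vset G w P i` is the set of vertices whose nearest vertex on the walk `P` is `P.getVert i`,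
i.e. `V_i = {x : d_G(x, v_i) = d_G(x, V(P))}`. -/
def Vset {V : Type*} (G : SimpleGraph V) (w : V → V → ℝ) {u v : V} (P : G.Walk u v)
    (i : ℕ) : Set V :=
  {x : V | G.wdist w x (P.getVert i) = G.wdistS w x {z | z ∈ P.support}}

/-!
The tree path from `u` to `v` is a shortest `u`-`v` walk of `G`, hence it is `P`. The tree paths
from `x` to `u` and from `x` to `v` first meet `P` in the same vertex `y`, and since `T` preserves
distances from `u` and from `v`, `y` lies on shortest walks of `G` from `x` to `u` and from `x`
to `v`. If `a` and `b` are nearest vertices of `P` to `x`, in the order `u, a, b, v` along `P`,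
then `d(x,u) ≤ d(x,P) + d(a,u)` and `d(x,v) ≤ d(x,P) + d(b,v)`, while
`d(x,u) + d(x,v) = 2 d(x,y) + d(u,y) + d(y,v) ≥ 2 d(x,P) + d(u,a) + d(a,b) + d(b,v)`.
Hence `d(a,b) ≤ 0`, that is, `a = b`.
-/

namespace SimpleGraph

variable {V : Type*} {G : SimpleGraph V} {w : V → V → ℝ}

namespace Walk

lemma wlength_cons {x y z : V} (h : G.Adj x y) (p : G.Walk y z) :
    (cons h p).wlength w = w x y + p.wlength w := by
  simp [wlength]

lemma wlength_append {x y z : V} (p : G.Walk x y) (q : G.Walk y z) :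
    (p.append q).wlength w = p.wlength w + q.wlength w := by
  simp [wlength, darts_append]

lemma wlength_reverse (hsymm : ∀ a b : V, w a b = w b a) {x y : V} (p : G.Walk x y) :
    p.reverse.wlength w = p.wlength w := by
  simp only [wlength, darts_reverse, List.map_reverse, List.sum_reverse, List.map_map]
  congr 1
  ext d
  simp [Dart.symm, hsymm]

lemma wlength_mapLe {T : SimpleGraph V} (hTG : T ≤ G) {x y : V} (p : T.Walk x y) :
    (p.mapLe hTG).wlength w = p.wlength w := by
  simp [wlength, mapLe, darts_map, Function.comp_def]

lemma wlength_nonneg (hpos : ∀ a b : V, G.Adj a b → 0 < w a b) {x y : V} (p : G.Walk x y) :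
    0 ≤ p.wlength w :=
  List.sum_nonneg <| by
    simp only [List.mem_map]
    rintro _ ⟨d, -, rfl⟩
    exact (hpos _ _ d.adj).le

lemma wlength_bypass_le [DecidableEq V] (hpos : ∀ a b : V, G.Adj a b → 0 < w a b) {x y : V}
    (p : G.Walk x y) : p.bypass.wlength w ≤ p.wlength w :=
  (p.darts_bypass_sublist_darts.map _).sum_le_sum <| by
    simp only [List.mem_map]
    rintro _ ⟨d, -, rfl⟩
    exact (hpos _ _ d.adj).le

end Walk

lemma wdist_le_wlength (hpos : ∀ a b : V, G.Adj a b → 0 < w a b) {x y : V} (p : G.Walk x y) :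
    G.wdist w x y ≤ p.wlength w :=
  csInf_le ⟨0, fun _ ⟨q, hq⟩ => hq ▸ q.wlength_nonneg hpos⟩ ⟨p, rfl⟩

lemma wdist_nonneg (hpos : ∀ a b : V, G.Adj a b → 0 < w a b) (x y : V) :
    0 ≤ G.wdist w x y :=
  Real.sInf_nonneg fun _ ⟨p, hp⟩ => hp ▸ p.wlength_nonneg hpos

lemma wdistS_le_wdist (hpos : ∀ a b : V, G.Adj a b → 0 < w a b) (x : V) {S : Set V} {y : V}
    (hy : y ∈ S) : G.wdistS w x S ≤ G.wdist w x y :=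
  csInf_le ⟨0, fun _ ⟨z, _, hz⟩ => hz ▸ wdist_nonneg hpos x z⟩ ⟨y, hy, rfl⟩

lemma wdist_comm (hsymm : ∀ a b : V, w a b = w b a) (x y : V) :
    G.wdist w x y = G.wdist w y x := by
  unfold wdist
  congr 1
  ext r
  exact ⟨fun ⟨p, hp⟩ => ⟨p.reverse, hp ▸ p.wlength_reverse hsymm⟩,
    fun ⟨p, hp⟩ => ⟨p.reverse, hp ▸ p.wlength_reverse hsymm⟩⟩

lemma Walk.IsPath.append_of_support_inter {x y z : V} {p : G.Walk x y} {q : G.Walk y z}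
    (hp : p.IsPath) (hq : q.IsPath) (hpq : ∀ c ∈ p.support, c ∈ q.support → c = y) :
    (p.append q).IsPath := by
  rw [Walk.isPath_def, Walk.support_append]
  have hq' := hq.support_nodup
  rw [← q.cons_tail_support, List.nodup_cons] at hq'
  refine hp.support_nodup.append hq'.2 fun c hcp hcq => ?_
  obtain rfl := hpq c hcp (q.cons_tail_support ▸ List.mem_cons_of_mem _ hcq)
  exact hq'.1 hcq

lemma Walk.exists_append_first_mem {x u : V} (p : G.Walk x u) {S : Set V} (hu : u ∈ S) :
    ∃ y ∈ S, ∃ (p₁ : G.Walk x y) (p₂ : G.Walk y u), p = p₁.append p₂ ∧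
      ∀ c ∈ p₁.support, c ∈ S → c = y := by
  induction p with
  | nil => exact ⟨_, hu, nil, nil, rfl, by simp⟩
  | @cons x c u h p ih =>
    by_cases hx : x ∈ S
    · exact ⟨x, hx, nil, cons h p, rfl, by simp⟩
    obtain ⟨y, hy, p₁, p₂, rfl, hfirst⟩ := ih hu
    refine ⟨y, hy, cons h p₁, p₂, rfl, fun c hc hcS => ?_⟩
    rcases List.mem_cons.1 (support_cons h p₁ ▸ hc) with rfl | hc
    · exact absurd hcS hx
    · exact hfirst c hc hcS

variable [Fintype V]

/-- A walk is never shorter than its bypass, and there are only finitely many paths. -/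
lemma exists_isPath_wlength_eq_wdist (hG : G.Connected)
    (hpos : ∀ a b : V, G.Adj a b → 0 < w a b) (x y : V) :
    ∃ p : G.Walk x y, p.IsPath ∧ p.wlength w = G.wdist w x y := by
  classical
  have : Nonempty (G.Path x y) := ⟨(hG.preconnected x y).some.toPath⟩
  obtain ⟨p, hp⟩ := Finite.exists_min fun q : G.Path x y => (q : G.Walk x y).wlength w
  refine ⟨p, p.2, (IsLeast.csInf_eq (s := {r | ∃ q : G.Walk x y, q.wlength w = r})
    ⟨⟨p, rfl⟩, ?_⟩).symm⟩
  rintro _ ⟨q, rfl⟩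
  exact (hp q.toPath).trans (q.wlength_bypass_le hpos)

lemma wdist_triangle (hG : G.Connected) (hpos : ∀ a b : V, G.Adj a b → 0 < w a b) (x y z : V) :
    G.wdist w x z ≤ G.wdist w x y + G.wdist w y z := by
  obtain ⟨p, -, hp⟩ := exists_isPath_wlength_eq_wdist hG hpos x y
  obtain ⟨q, -, hq⟩ := exists_isPath_wlength_eq_wdist hG hpos y z
  calc G.wdist w x z ≤ (p.append q).wlength w := wdist_le_wlength hpos _
    _ = G.wdist w x y + G.wdist w y z := by rw [Walk.wlength_append, hp, hq]

lemma wdist_pos (hG : G.Connected) (hpos : ∀ a b : V, G.Adj a b → 0 < w a b) {x y : V}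
    (hxy : x ≠ y) : 0 < G.wdist w x y := by
  obtain ⟨p, -, hp⟩ := exists_isPath_wlength_eq_wdist hG hpos x y
  rw [← hp]
  cases p with
  | nil => exact absurd rfl hxy
  | cons h q => rw [Walk.wlength_cons]; linarith [hpos _ _ h, q.wlength_nonneg hpos]

lemma wdist_le_wdist_of_le {T : SimpleGraph V} (hTG : T ≤ G) (hT : T.Connected)
    (hpos : ∀ a b : V, G.Adj a b → 0 < w a b) (x y : V) : G.wdist w x y ≤ T.wdist w x y := by
  obtain ⟨p, -, hp⟩ := exists_isPath_wlength_eq_wdist hT (fun a b h => hpos a b (hTG h)) x y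
  rw [← hp, ← Walk.wlength_mapLe hTG]
  exact wdist_le_wlength hpos _

lemma Walk.wlength_eq_wdist_of_append (hG : G.Connected)
    (hpos : ∀ a b : V, G.Adj a b → 0 < w a b) {x y z : V} {p : G.Walk x y} {q : G.Walk y z}
    (h : (p.append q).wlength w = G.wdist w x z) :
    p.wlength w = G.wdist w x y ∧ q.wlength w = G.wdist w y z := by
  rw [wlength_append] at h
  have := wdist_triangle hG hpos x y z
  have := wdist_le_wlength hpos p
  have := wdist_le_wlength hpos q
  constructor <;> linarith

lemma Walk.wdist_add_wdist_add_wdist_of_mem_support (hG : G.Connected)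
    (hpos : ∀ a b : V, G.Adj a b → 0 < w a b) {u v : V} {P : G.Walk u v}
    (hP : P.wlength w = G.wdist w u v) {a b : V} (ha : a ∈ P.support) (hb : b ∈ P.support) :
    G.wdist w u a + G.wdist w a b + G.wdist w b v = G.wdist w u v ∨
      G.wdist w u b + G.wdist w b a + G.wdist w a v = G.wdist w u v := by
  classical
  rw [← P.take_spec ha] at hb hP
  obtain ⟨hua, hav⟩ := wlength_eq_wdist_of_append hG hpos hP
  rcases (mem_support_append_iff _ _).1 hb with hb | hb
  · right
    rw [← (P.takeUntil a ha).take_spec hb] at hua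
    obtain ⟨hub, hba⟩ := wlength_eq_wdist_of_append hG hpos hua
    rw [← hP, wlength_append, ← (P.takeUntil a ha).take_spec hb, wlength_append, hub, hba, hav]
  · left
    rw [← (P.dropUntil a ha).take_spec hb] at hav
    obtain ⟨hab, hbv⟩ := wlength_eq_wdist_of_append hG hpos hav
    rw [← hP, wlength_append, ← (P.dropUntil a ha).take_spec hb, wlength_append, hab, hbv, hua,
      add_assoc]

lemma IsTree.wlength_eq_wdist {T : SimpleGraph V} (hT : T.IsTree)
    (hpos : ∀ a b : V, T.Adj a b → 0 < w a b) {x y : V} {p : T.Walk x y} (hp : p.IsPath) :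
    p.wlength w = T.wdist w x y := by
  obtain ⟨q, hq, hql⟩ := exists_isPath_wlength_eq_wdist hT.connected hpos x y
  rw [← hql, (hT.existsUnique_path x y).unique hp hq]

/-- The median is the first vertex of the path from `x` to `u` that lies on `Q`: followed by
the rest of `Q` it gives the path from `x` to `v`. -/
lemma IsTree.exists_median_mem_support {T : SimpleGraph V} (hT : T.IsTree)
    (hpos : ∀ a b : V, T.Adj a b → 0 < w a b) {u v : V} {Q : T.Walk u v} (hQ : Q.IsPath)
    (x : V) : ∃ y ∈ Q.support, T.wdist w x y + T.wdist w y u = T.wdist w x u ∧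
      T.wdist w x y + T.wdist w y v = T.wdist w x v := by
  classical
  obtain ⟨S, hS, -⟩ := exists_isPath_wlength_eq_wdist hT.connected hpos x u
  obtain ⟨y, hy, S₁, S₂, rfl, hfirst⟩ := S.exists_append_first_mem (S := {c | c ∈ Q.support})
    Q.start_mem_support
  have hS₁ : S₁.IsPath := hS.of_append_left
  have hQy : (Q.dropUntil y hy).IsPath := hQ.dropUntil hy
  have hR : (S₁.append (Q.dropUntil y hy)).IsPath := hS₁.append_of_support_inter hQy
    fun c hc hcQ => hfirst c hc (Q.support_dropUntil_subset_support hy hcQ)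
  refine ⟨y, hy, ?_, ?_⟩
  · rw [← hT.wlength_eq_wdist hpos hS, Walk.wlength_append, hT.wlength_eq_wdist hpos hS₁,
      hT.wlength_eq_wdist hpos hS.of_append_right]
  · rw [← hT.wlength_eq_wdist hpos hR, Walk.wlength_append, hT.wlength_eq_wdist hpos hS₁,
      hT.wlength_eq_wdist hpos hQy]

lemma exists_wdist_eq_wdistS (x : V) {S : Set V} (hS : S.Nonempty) :
    ∃ y ∈ S, G.wdist w x y = G.wdistS w x S :=
  (hS.image _).csInf_mem (S.toFinite.image _)

lemma eq_of_wdist_eq_wdistS_of_median (hG : G.Connected) (hsymm : ∀ a b : V, w a b = w b a)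
    (hpos : ∀ a b : V, G.Adj a b → 0 < w a b) {S : Set V} {x y u v a b : V} (hyS : y ∈ S)
    (hyu : G.wdist w x y + G.wdist w y u ≤ G.wdist w x u)
    (hyv : G.wdist w x y + G.wdist w y v ≤ G.wdist w x v)
    (ha : G.wdist w x a = G.wdistS w x S) (hb : G.wdist w x b = G.wdistS w x S)
    (habuv : G.wdist w u a + G.wdist w a b + G.wdist w b v = G.wdist w u v) : a = b := by
  by_contra hab
  have := wdist_pos hG hpos hab
  have := wdistS_le_wdist hpos x hyS
  have := wdist_triangle hG hpos x a u
  have := wdist_triangle hG hpos x b v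
  have := wdist_triangle hG hpos u y v
  linarith [wdist_comm hsymm (G := G) a u, wdist_comm hsymm (G := G) u y]

end SimpleGraph

open SimpleGraph in
theorem unique_nearest_vertex_on_path_general {V : Type*} [Fintype V] (G : SimpleGraph V)
    (hG : G.Connected) (w : V → V → ℝ) (hsymm : ∀ a b : V, w a b = w b a)
    (hpos : ∀ a b : V, G.Adj a b → 0 < w a b) (u v : V)
    (T : SimpleGraph V) (hTG : T ≤ G) (hT : T.IsTree)
    (hdpu : ∀ x : V, T.wdist w u x = G.wdist w u x)
    (hdpv : ∀ x : V, T.wdist w v x = G.wdist w v x)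
    (P : G.Walk u v) (hPshort : P.wlength w = G.wdist w u v)
    (hPuniq : ∀ Q : G.Walk u v, Q.IsPath → Q.wlength w = G.wdist w u v → Q = P) :
    ∀ x : V, ∃! y : V, y ∈ P.support ∧
      G.wdist w x y = G.wdistS w x {z | z ∈ P.support} := by
  intro x
  have hTpos : ∀ a b : V, T.Adj a b → 0 < w a b := fun a b h => hpos a b (hTG h)
  obtain ⟨Q, hQ, hQl⟩ := exists_isPath_wlength_eq_wdist hT.connected hTpos u v
  have hQP : Q.mapLe hTG = P :=
    hPuniq _ (hQ.mapLe hTG) (by rw [Walk.wlength_mapLe, hQl, hdpu])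
  obtain ⟨y, hyQ, hyu, hyv⟩ := hT.exists_median_mem_support hTpos hQ x
  have hyP : y ∈ P.support := by simpa [← hQP] using hyQ
  have hTdist (a b : V) := wdist_le_wdist_of_le hTG hT.connected hpos a b
  have hyu' : G.wdist w x y + G.wdist w y u ≤ G.wdist w x u := by
    rw [wdist_comm hsymm x u, ← hdpu, wdist_comm hsymm u x]
    linarith [hTdist x y, hTdist y u]
  have hyv' : G.wdist w x y + G.wdist w y v ≤ G.wdist w x v := by
    rw [wdist_comm hsymm x v, ← hdpv, wdist_comm hsymm v x]
    linarith [hTdist x y, hTdist y v]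
  obtain ⟨c, hc, hcx⟩ := exists_wdist_eq_wdistS (G := G) (w := w) x
    (S := {z | z ∈ P.support}) ⟨u, P.start_mem_support⟩
  refine ⟨c, ⟨hc, hcx⟩, fun b ⟨hb, hbx⟩ => ?_⟩
  rcases Walk.wdist_add_wdist_add_wdist_of_mem_support hG hpos hPshort hb hc with h | h
  · exact eq_of_wdist_eq_wdistS_of_median hG hsymm hpos hyP hyu' hyv' hbx hcx h
  · exact (eq_of_wdist_eq_wdistS_of_median hG hsymm hpos hyP hyu' hyv' hcx hbx h).symm

/-- **Lemma 2.** If `u` and `v` have a common distance-preserving spanning tree `T` in `G`,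
and `P` is the unique shortest `u`-`v` path in `G`, then every vertex `x` of `G` has a
unique nearest vertex on `P`. -/
theorem unique_nearest_vertex_on_path {V : Type*} [Fintype V] (G : SimpleGraph V)
    (hG : G.Connected) (w : V → V → ℝ) (hsymm : ∀ a b : V, w a b = w b a)
    (hpos : ∀ a b : V, G.Adj a b → 0 < w a b) (u v : V)
    (T : SimpleGraph V) (hTG : T ≤ G) (hT : T.IsTree)
    (hdpu : ∀ x : V, T.wdist w u x = G.wdist w u x)
    (hdpv : ∀ x : V, T.wdist w v x = G.wdist w v x)
    (P : G.Walk u v) (hP : P.IsPath) (hPshort : P.wlength w = G.wdist w u v)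
    (hPuniq : ∀ Q : G.Walk u v, Q.IsPath → Q.wlength w = G.wdist w u v → Q = P) :
    ∀ x : V, ∃! y : V, y ∈ P.support ∧
      G.wdist w x y = G.wdistS w x {z | z ∈ P.support} :=
  unique_nearest_vertex_on_path_general G hG w hsymm hpos u v T hTG hT hdpu hdpv P hPshort hPuniq
end

section
/- Let G be a connected finite weighted graph with positive edge weights, and let u and v be two vertices of G such that: the shortest u-v path P = (u = v_0, v_1, ..., v_k = v) in G is unique, and for every vertex x of G there is a unique vertex v_i on P with d_G(x, v_i) = d_G(x, V(P)). For 0 ≤ i ≤ k let V_i = {x ∈ V(G) : d_G(x, v_i) = d_G(x, V(P))}. Then for each 0 ≤ i ≤ k, the subgraph G[V_i] of G induced by V_i is connected. -/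
open SimpleGraph

section lemmas
variable {V : Type*} {G : SimpleGraph V} {w : V → V → ℝ}

lemma wlength_nil {x : V} : (Walk.nil : G.Walk x x).wlength w = 0 := rfl

lemma wlength_cons {x y z : V} (h : G.Adj x y) (p : G.Walk y z) :
    (Walk.cons h p).wlength w = w x y + p.wlength w := by
  simp [Walk.wlength]

lemma wlength_append {x y z : V} (p : G.Walk x y) (q : G.Walk y z) :
    (p.append q).wlength w = p.wlength w + q.wlength w := by
  simp [Walk.wlength, Walk.darts_append]

lemma wlength_nonneg (hpos : ∀ a b : V, G.Adj a b → 0 < w a b) {x y : V} (p : G.Walk x y) :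
    0 ≤ p.wlength w := by
  apply List.sum_nonneg
  intro r hr
  simp only [List.mem_map] at hr
  obtain ⟨d, hd, rfl⟩ := hr
  exact (hpos _ _ d.adj).le

lemma wlength_bypass_le [DecidableEq V] (hpos : ∀ a b : V, G.Adj a b → 0 < w a b) {x y : V} (p : G.Walk x y) :
    p.bypass.wlength w ≤ p.wlength w := by
  classical
  induction p with
  | nil => simp [Walk.bypass]
  | @cons a b c h p ih =>
    simp only [Walk.bypass]
    split_ifs with hb
    · have hsplit := Walk.take_spec p.bypass hb
      have : (p.bypass.takeUntil a hb).wlength w + (p.bypass.dropUntil a hb).wlength w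
          = p.bypass.wlength w := by
        rw [← wlength_append, hsplit]
      have h1 : (p.bypass.dropUntil a hb).wlength w ≤ p.bypass.wlength w := by
        nlinarith [wlength_nonneg hpos (p.bypass.takeUntil a hb)]
      calc (p.bypass.dropUntil a hb).wlength w ≤ p.bypass.wlength w := h1
        _ ≤ p.wlength w := ih
        _ ≤ (Walk.cons h p).wlength w := by rw [wlength_cons]; linarith [(hpos _ _ h).le]
    · rw [wlength_cons, wlength_cons]
      linarith [ih]

lemma exists_shortest [Fintype V] [DecidableEq V] [DecidableRel G.Adj] (hpos : ∀ a b : V, G.Adj a b → 0 < w a b) {x y : V}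
    (h : G.Reachable x y) :
    ∃ p : G.Walk x y, p.IsPath ∧ p.wlength w = G.wdist w x y := by
  classical
  obtain ⟨q⟩ := h
  -- finite set of path lengths
  let T : Finset ℝ := Finset.univ.image (fun p : G.Path x y => (p : G.Walk x y).wlength w)
  have hT : T.Nonempty := ⟨_, Finset.mem_image_of_mem _ (Finset.mem_univ q.toPath)⟩
  obtain ⟨m, hmT, hmin⟩ := T.exists_min_image id hT
  obtain ⟨p0, _, hp0⟩ := Finset.mem_image.mp hmT
  have hle : ∀ r ∈ {r : ℝ | ∃ p : G.Walk x y, p.wlength w = r}, m ≤ r := by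
    rintro r ⟨p, rfl⟩
    calc m ≤ (p.toPath : G.Walk x y).wlength w :=
          hmin _ (Finset.mem_image_of_mem _ (Finset.mem_univ p.toPath))
      _ ≤ p.wlength w := wlength_bypass_le hpos p
  have hmem : m ∈ {r : ℝ | ∃ p : G.Walk x y, p.wlength w = r} := ⟨p0, hp0⟩
  have : G.wdist w x y = m := le_antisymm (csInf_le ⟨m, hle⟩ hmem) (le_csInf ⟨m, hmem⟩ hle)
  exact ⟨p0, p0.2, by rw [hp0, this]⟩

lemma wdist_nonneg (hpos : ∀ a b : V, G.Adj a b → 0 < w a b) {x y : V}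
    (h : G.Reachable x y) : 0 ≤ G.wdist w x y := by
  obtain ⟨q⟩ := h
  exact le_csInf ⟨_, q, rfl⟩ (by rintro r ⟨p, rfl⟩; exact wlength_nonneg hpos p)

lemma wdist_le (hpos : ∀ a b : V, G.Adj a b → 0 < w a b) {x y : V} (p : G.Walk x y) :
    G.wdist w x y ≤ p.wlength w :=
  csInf_le ⟨0, by rintro r ⟨q, rfl⟩; exact wlength_nonneg hpos q⟩ ⟨p, rfl⟩

lemma wdist_self (hpos : ∀ a b : V, G.Adj a b → 0 < w a b) (x : V) :
    G.wdist w x x = 0 :=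
  le_antisymm (by simpa [wlength_nil] using wdist_le (G := G) hpos (Walk.nil : G.Walk x x))
    (wdist_nonneg hpos (Reachable.refl x))

lemma wdist_triangle [Fintype V] (hpos : ∀ a b : V, G.Adj a b → 0 < w a b) {x y z : V}
    (h1 : G.Reachable x y) (h2 : G.Reachable y z) :
    G.wdist w x z ≤ G.wdist w x y + G.wdist w y z := by
  classical
  obtain ⟨p, _, hp⟩ := exists_shortest hpos h1
  obtain ⟨q, _, hq⟩ := exists_shortest hpos h2
  calc G.wdist w x z ≤ (p.append q).wlength w := wdist_le hpos _
    _ = G.wdist w x y + G.wdist w y z := by rw [wlength_append, hp, hq]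


lemma wdistS_exists [Fintype V] (x : V) {u v : V} (P : G.Walk u v) :
    ∃ z ∈ P.support, G.wdist w x z = G.wdistS w x {z | z ∈ P.support} := by
  have hfin : (G.wdist w x '' {z | z ∈ P.support}).Finite :=
    (Set.toFinite {z | z ∈ P.support}).image _
  have hne : (G.wdist w x '' {z | z ∈ P.support}).Nonempty :=
    ⟨_, ⟨u, P.start_mem_support, rfl⟩⟩
  obtain ⟨z, hz, hzeq⟩ := hne.csInf_mem hfin
  exact ⟨z, hz, hzeq⟩

lemma wdistS_le [Fintype V] (x : V) {u v : V} (P : G.Walk u v) {z : V} (hz : z ∈ P.support) :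
    G.wdistS w x {z | z ∈ P.support} ≤ G.wdist w x z :=
  csInf_le (((Set.toFinite {z | z ∈ P.support}).image _).bddBelow) ⟨z, hz, rfl⟩

lemma support_shortest_mem_Vset [Fintype V] (hG : G.Connected)
    (hpos : ∀ a b : V, G.Adj a b → 0 < w a b) {u v : V} (P : G.Walk u v)
    {i : ℕ} (hi : i ≤ P.length) {x : V} (hx : x ∈ Vset G w P i)
    {p : G.Walk x (P.getVert i)} (hp : p.wlength w = G.wdist w x (P.getVert i))
    {y : V} (hy : y ∈ p.support) : y ∈ Vset G w P i := by
  classical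
  have hviP : P.getVert i ∈ P.support :=
    Walk.mem_support_iff_exists_getVert.mpr ⟨i, rfl, hi⟩
  have hx' : G.wdist w x (P.getVert i) = G.wdistS w x {z | z ∈ P.support} := hx
  have hsplit : (p.takeUntil y hy).wlength w + (p.dropUntil y hy).wlength w = p.wlength w := by
    rw [← wlength_append, Walk.take_spec]
  obtain ⟨z, hzP, hz⟩ := wdistS_exists (w := w) y P
  have h1 : G.wdist w x y ≤ (p.takeUntil y hy).wlength w := wdist_le hpos _
  have h2 : G.wdist w y (P.getVert i) ≤ (p.dropUntil y hy).wlength w := wdist_le hpos _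
  have h3 : G.wdistS w x {z | z ∈ P.support} ≤ G.wdist w x z := wdistS_le x P hzP
  have h4 : G.wdist w x z ≤ G.wdist w x y + G.wdist w y z :=
    wdist_triangle hpos (hG.preconnected x y) (hG.preconnected y z)
  have h5 : G.wdistS w y {z | z ∈ P.support} ≤ G.wdist w y (P.getVert i) := wdistS_le y P hviP
  show G.wdist w y (P.getVert i) = G.wdistS w y {z | z ∈ P.support}
  linarith

lemma reachable_induce_of_walk {S : Set V} {x y : V} (p : G.Walk x y)
    (hs : ∀ z ∈ p.support, z ∈ S) (hx : x ∈ S) (hy : y ∈ S) :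
    (G.induce S).Reachable ⟨x, hx⟩ ⟨y, hy⟩ := by
  induction p with
  | nil => rfl
  | @cons a b c h p ih =>
    have hb : b ∈ S := hs _ (by simp)
    have hstep : (G.induce S).Adj ⟨a, hx⟩ ⟨b, hb⟩ := h
    exact hstep.reachable.trans (ih (fun z hz => hs z (by simp [hz])) hb hy)

end lemmas

/-- **Lemma 4.** Under conditions (1) and (2), each induced subgraph `G[V_i]` is connected. -/
theorem induced_Vset_connected {V : Type*} [Fintype V] (G : SimpleGraph V)
    (hG : G.Connected) (w : V → V → ℝ) (hsymm : ∀ a b : V, w a b = w b a)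
    (hpos : ∀ a b : V, G.Adj a b → 0 < w a b) (u v : V)
    (P : G.Walk u v) (hP : P.IsPath) (hPshort : P.wlength w = G.wdist w u v)
    (hPuniq : ∀ Q : G.Walk u v, Q.IsPath → Q.wlength w = G.wdist w u v → Q = P)
    (hnear : ∀ x : V, ∃! y : V, y ∈ P.support ∧
      G.wdist w x y = G.wdistS w x {z | z ∈ P.support}) :
    ∀ i : ℕ, i ≤ P.length → (G.induce (Vset G w P i)).Connected := by
  classical
  intro i hi
  have hviP : P.getVert i ∈ P.support :=
    Walk.mem_support_iff_exists_getVert.mpr ⟨i, rfl, hi⟩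
  have hviV : P.getVert i ∈ Vset G w P i := by
    show G.wdist w (P.getVert i) (P.getVert i)
        = G.wdistS w (P.getVert i) {z | z ∈ P.support}
    have h1 := wdistS_le (w := w) (P.getVert i) P hviP
    have h2 : 0 ≤ G.wdistS w (P.getVert i) {z | z ∈ P.support} := by
      obtain ⟨z, hzP, hz⟩ := wdistS_exists (w := w) (P.getVert i) P
      rw [← hz]; exact wdist_nonneg hpos (hG.preconnected _ _)
    rw [wdist_self hpos] at h1 ⊢
    linarith
  rw [connected_iff]
  refine ⟨?_, ⟨⟨P.getVert i, hviV⟩⟩⟩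
  rintro ⟨x, hx⟩ ⟨y, hy⟩
  obtain ⟨p, _, hp⟩ := exists_shortest hpos (hG.preconnected x (P.getVert i))
  obtain ⟨q, _, hq⟩ := exists_shortest hpos (hG.preconnected y (P.getVert i))
  have hsup : ∀ z ∈ (p.append q.reverse).support, z ∈ Vset G w P i := by
    intro z hz
    rw [Walk.mem_support_append_iff] at hz
    cases hz with
    | inl h => exact support_shortest_mem_Vset hG hpos P hi hx hp h
    | inr h =>
      exact support_shortest_mem_Vset hG hpos P hi hy hq
        (by rwa [Walk.support_reverse, List.mem_reverse] at h)
  exact reachable_induce_of_walk (p.append q.reverse) hsup hx hy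
end
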